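/- Eigenvalue ratios and the mass gap (Lemma A.1): Fix J > 0 and μ_h with μ_h + J > 0, and set a = e^{−β(μ_h+J)/2}, b = e^{−βJ}. With the eigenvalues λ₁, λ₂, λ₃ of the transfer matrix T as in Proposition A.2, as β → ∞ one has λ₂/λ₁ = −1 + ab(1+o(1)) and λ₃/λ₂ = −a + ab(1+o(1)), i.e. ((λ₂/λ₁) + 1)/(ab) → 1 and ((λ₃/λ₂) + a)/(ab) → 1. Moreover, setting m := −log|λ₂/λ₁|, one has e^{−m} = 1 − e^{−β(μ_h+3J)/2}(1+o(1)), i.e. (1 − e^{−m})/e^{−β(μ_h+3J)/2} → 1 as β → ∞ (note ab = e^{−β(μ_h+3J)/2}). -/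

import Mathlib

open Filter

noncomputable section

/-- `a(β) = e^{−β(μ_h+J)/2}`. -/
def aOf (β μh J : ℝ) : ℝ := Real.exp (-(β * (μh + J) / 2))

/-- `b(β) = e^{−βJ}`. -/
def bOf (β J : ℝ) : ℝ := Real.exp (-(β * J))

/-- `λ` is a root of the characteristic polynomial
`p(λ) = (λ−a)(λ²−1) − ab` of the transfer matrix. -/
def IsCharRoot (a b lam : ℝ) : Prop := (lam - a) * (lam ^ 2 - 1) - a * b = 0

/-!
The characteristic polynomial `p(x) = (x - a)(x² - 1) - ab` equals `-ab < 0` at `-1`, `a` and `1`,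
and is already positive at `-1 + ab`, `a - 2ab` and `1 + ab`. Comparing these signs with the
factorisation `p(x) = (x - λ₂)(x - λ₃)(x - λ₁)` traps the roots in
`(-1, -1 + ab)`, `(a - 2ab, a)` and `(1, 1 + ab)`. Dividing the root equation by its two factors
that stay away from zero then gives `λ₂ + 1 ~ ab/2`, `λ₁ - 1 ~ ab/2` and `λ₃ - a ~ -ab`, which
yields both ratios; and `e^{-m} = |λ₂/λ₁| = -λ₂/λ₁`, so the mass gap is the first ratio again.
-/

open Topology

section Cubic

variable {R : Type*} [CommRing R] [IsDomain R]

theorem cubic_eq_prod_sub_of_roots {p q r u v w : R} (huv : u ≠ v) (hvw : v ≠ w) (huw : u ≠ w)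
    (hu : u ^ 3 + p * u ^ 2 + q * u + r = 0) (hv : v ^ 3 + p * v ^ 2 + q * v + r = 0)
    (hw : w ^ 3 + p * w ^ 2 + q * w + r = 0) (x : R) :
    x ^ 3 + p * x ^ 2 + q * x + r = (x - u) * (x - v) * (x - w) := by
  have quv : u ^ 2 + u * v + v ^ 2 + p * (u + v) + q = 0 := by
    refine (mul_eq_zero.mp ?_).resolve_left (sub_ne_zero.mpr huv)
    linear_combination hu - hv
  have qvw : v ^ 2 + v * w + w ^ 2 + p * (v + w) + q = 0 := by
    refine (mul_eq_zero.mp ?_).resolve_left (sub_ne_zero.mpr hvw)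
    linear_combination hv - hw
  have sum : u + v + w + p = 0 := by
    refine (mul_eq_zero.mp ?_).resolve_left (sub_ne_zero.mpr huw)
    linear_combination quv - qvw
  have pairs : u * v + u * w + v * w - q = 0 := by linear_combination (u + v) * sum - quv
  have prod : u * v * w + r = 0 := by linear_combination hu - u ^ 2 * sum + u * pairs
  linear_combination x ^ 2 * sum - x * pairs + prod

end Cubic

section Sign

variable {K : Type*} [CommRing K] [LinearOrder K] [IsStrictOrderedRing K] {u v w x : K}

theorem sub_mul_sub_mul_sub_pos_iff (huv : u < v) (hvw : v < w) :
    0 < (x - u) * (x - v) * (x - w) ↔ u < x ∧ x < v ∨ w < x := by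
  constructor
  · intro h
    by_contra! hx
    rcases le_or_gt x u with hxu | hux
    · exact h.not_ge (mul_nonpos_of_nonneg_of_nonpos
        (mul_nonneg_of_nonpos_of_nonpos (sub_nonpos.2 hxu) (sub_nonpos.2 (hxu.trans huv.le)))
        (sub_nonpos.2 (hxu.trans (huv.trans hvw).le)))
    · exact h.not_ge (mul_nonpos_of_nonneg_of_nonpos
        (mul_nonneg (sub_nonneg.2 hux.le) (sub_nonneg.2 (hx.1 hux))) (sub_nonpos.2 hx.2))
  · rintro (⟨hux, hxv⟩ | hwx)
    · exact mul_pos_of_neg_of_neg (mul_neg_of_pos_of_neg (sub_pos.2 hux) (sub_neg.2 hxv))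
        (sub_neg.2 (hxv.trans hvw))
    · have hvx := hvw.trans hwx
      exact mul_pos (mul_pos (sub_pos.2 (huv.trans hvx)) (sub_pos.2 hvx)) (sub_pos.2 hwx)

theorem sub_mul_sub_mul_sub_neg_iff (huv : u < v) (hvw : v < w) :
    (x - u) * (x - v) * (x - w) < 0 ↔ x < u ∨ v < x ∧ x < w := by
  constructor
  · intro h
    by_contra! hx
    rcases le_or_gt x v with hxv | hvx
    · exact h.not_ge (mul_nonneg_of_nonpos_of_nonpos
        (mul_nonpos_of_nonneg_of_nonpos (sub_nonneg.2 hx.1) (sub_nonpos.2 hxv))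
        (sub_nonpos.2 (hxv.trans hvw.le)))
    · exact h.not_ge (mul_nonneg (mul_pos (sub_pos.2 (huv.trans hvx)) (sub_pos.2 hvx)).le
        (sub_nonneg.2 (hx.2 hvx)))
  · rintro (hxu | ⟨hvx, hxw⟩)
    · have hxv := hxu.trans huv
      exact mul_neg_of_pos_of_neg (mul_pos_of_neg_of_neg (sub_neg.2 hxu) (sub_neg.2 hxv))
        (sub_neg.2 (hxv.trans hvw))
    · exact mul_neg_of_pos_of_neg (mul_pos (sub_pos.2 (huv.trans hvx)) (sub_pos.2 hvx))
        (sub_neg.2 hxw)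

end Sign

theorem IsCharRoot.neg_one_lt {a b l : ℝ} (ha : 0 < a) (hb : 0 < b) (h : IsCharRoot a b l) :
    -1 < l := by
  by_contra! hl
  have : (l - a) * (l ^ 2 - 1) ≤ 0 := mul_nonpos_of_nonpos_of_nonneg (by linarith) (by nlinarith)
  unfold IsCharRoot at h
  linarith [mul_pos ha hb]

theorem charPoly_eq_prod_of_isCharRoot {a b l₁ l₂ l₃ : ℝ} (h₁ : IsCharRoot a b l₁)
    (h₂ : IsCharRoot a b l₂) (h₃ : IsCharRoot a b l₃) (h₂₃ : l₂ ≠ l₃) (h₃₁ : l₃ ≠ l₁)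
    (h₂₁ : l₂ ≠ l₁) (x : ℝ) :
    (x - a) * (x ^ 2 - 1) - a * b = (x - l₂) * (x - l₃) * (x - l₁) := by
  unfold IsCharRoot at h₁ h₂ h₃
  linear_combination cubic_eq_prod_sub_of_roots (p := -a) (q := -1) (r := a - a * b) h₂₃ h₃₁ h₂₁
    (by linear_combination h₂) (by linear_combination h₃) (by linear_combination h₁) x

theorem charRoots_bounds {a b l₁ l₂ l₃ : ℝ} (ha : 0 < a) (ha' : a < 1 / 2) (hb : 0 < b)
    (hab : a * b < 1 / 4) (h₁ : IsCharRoot a b l₁) (h₂ : IsCharRoot a b l₂)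
    (h₃ : IsCharRoot a b l₃) (h₂₃ : l₂ < l₃) (h₃₁ : l₃ < l₁) :
    (-1 < l₂ ∧ l₂ < -1 + a * b) ∧ (a - 2 * (a * b) < l₃ ∧ l₃ < a) ∧
      (1 < l₁ ∧ l₁ < 1 + a * b) := by
  have hp := charPoly_eq_prod_of_isCharRoot h₁ h₂ h₃ h₂₃.ne h₃₁.ne (h₂₃.trans h₃₁).ne
  set ε := a * b
  have hε : 0 < ε := mul_pos ha hb
  have pos_iff x := sub_mul_sub_mul_sub_pos_iff (x := x) h₂₃ h₃₁
  have neg_iff x := sub_mul_sub_mul_sub_neg_iff (x := x) h₂₃ h₃₁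
  have hl₁ : 1 < l₁ := by
    rcases (neg_iff 1).1 (by rw [← hp]; linarith) with h | ⟨-, h⟩ <;> linarith
  have hl₂ : l₂ < -1 + ε ∧ -1 + ε < l₃ := by
    have : 0 < (1 + a - ε) * (2 - ε) - 1 := by nlinarith
    rcases (pos_iff (-1 + ε)).1 (by rw [← hp]; nlinarith [mul_pos hε this]) with h | h
    · exact h
    · linarith
  have hl₃ : l₃ < a := by
    rcases (neg_iff a).1 (by rw [← hp]; linarith) with h | ⟨h, -⟩ <;> linarith
  have hl₃' : a - 2 * ε < l₃ := by
    have : 0 < 1 - 2 * (a - 2 * ε) ^ 2 := by nlinarith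
    rcases (pos_iff (a - 2 * ε)).1 (by rw [← hp]; nlinarith [mul_pos hε this]) with h | h
    · exact h.2
    · linarith
  have hl₁' : l₁ < 1 + ε := by
    have : 0 < (1 + ε - a) * (2 + ε) - 1 := by nlinarith
    rcases (pos_iff (1 + ε)).1 (by rw [← hp]; nlinarith [mul_pos hε this]) with h | h
    · linarith [h.2]
    · exact h
  exact ⟨⟨h₂.neg_one_lt ha hb, hl₂.1⟩, ⟨hl₃', hl₃⟩, ⟨hl₁, hl₁'⟩⟩

theorem Filter.Tendsto.div_of_eq_mul {ι K : Type*} [Field K] [TopologicalSpace K]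
    [ContinuousInv₀ K] {F : Filter ι} {x y z : ι → K} {c : K}
    (hy : Tendsto y F (𝓝 c)) (hc : c ≠ 0) (hxyz : ∀ᶠ i in F, z i = x i * y i)
    (hz : ∀ᶠ i in F, z i ≠ 0) :
    Tendsto (fun i => x i / z i) F (𝓝 c⁻¹) := by
  refine (hy.inv₀ hc).congr' ?_
  filter_upwards [hxyz, hz] with i h hz
  rw [h] at hz ⊢
  exact (div_mul_cancel_left₀ (left_ne_zero_of_mul hz) _).symm

section Asymptotics

variable {ι : Type*} {F : Filter ι} {a b l₁ l₂ l₃ : ι → ℝ}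

theorem tendsto_charRoots (ha : Tendsto a F (𝓝 0)) (hab : Tendsto (fun i => a i * b i) F (𝓝 0))
    (hpos : ∀ᶠ i in F, 0 < a i ∧ 0 < b i)
    (hroots : ∀ᶠ i in F, IsCharRoot (a i) (b i) (l₁ i) ∧ IsCharRoot (a i) (b i) (l₂ i) ∧
      IsCharRoot (a i) (b i) (l₃ i) ∧ l₂ i < l₃ i ∧ l₃ i < l₁ i) :
    Tendsto l₁ F (𝓝 1) ∧ Tendsto l₂ F (𝓝 (-1)) ∧ Tendsto l₃ F (𝓝 0) := by
  have hsmall := (ha.eventually_lt_const (by norm_num : (0 : ℝ) < 1 / 2)).and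
    (hab.eventually_lt_const (by norm_num : (0 : ℝ) < 1 / 4))
  have hbounds := ((hpos.and hroots).and hsmall).mono
    fun i ⟨⟨⟨ha, hb⟩, h₁, h₂, h₃, h₂₃, h₃₁⟩, ha', hab⟩ =>
      charRoots_bounds ha ha' hb hab h₁ h₂ h₃ h₂₃ h₃₁
  refine ⟨?_, ?_, ?_⟩
  · refine tendsto_of_tendsto_of_tendsto_of_le_of_le' tendsto_const_nhds
      (by simpa using hab.const_add 1) ?_ ?_ <;>
    filter_upwards [hbounds] with i h
    exacts [h.2.2.1.le, h.2.2.2.le]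
  · refine tendsto_of_tendsto_of_tendsto_of_le_of_le' tendsto_const_nhds
      (by simpa using hab.const_add (-1)) ?_ ?_ <;>
    filter_upwards [hbounds] with i h
    exacts [h.1.1.le, h.1.2.le]
  · refine tendsto_of_tendsto_of_tendsto_of_le_of_le' (by simpa using ha.sub (hab.const_mul 2))
      ha ?_ ?_ <;>
    filter_upwards [hbounds] with i h
    exacts [h.2.1.1.le, h.2.1.2.le]

theorem tendsto_charRoot_ratios (ha : Tendsto a F (𝓝 0))
    (hab : Tendsto (fun i => a i * b i) F (𝓝 0)) (hpos : ∀ᶠ i in F, 0 < a i ∧ 0 < b i)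
    (hroots : ∀ᶠ i in F, IsCharRoot (a i) (b i) (l₁ i) ∧ IsCharRoot (a i) (b i) (l₂ i) ∧
      IsCharRoot (a i) (b i) (l₃ i) ∧ l₂ i < l₃ i ∧ l₃ i < l₁ i) :
    Tendsto (fun i => (l₂ i / l₁ i + 1) / (a i * b i)) F (𝓝 1) ∧
      Tendsto (fun i => (l₃ i / l₂ i + a i) / (a i * b i)) F (𝓝 1) := by
  obtain ⟨hl₁, hl₂, hl₃⟩ := tendsto_charRoots ha hab hpos hroots
  have hab0 : ∀ᶠ i in F, a i * b i ≠ 0 := hpos.mono fun i h => (mul_pos h.1 h.2).ne'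
  simp only [IsCharRoot] at hroots
  have hr₁ : Tendsto (fun i => (l₁ i - 1) / (a i * b i)) F (𝓝 2⁻¹) := by
    refine Tendsto.div_of_eq_mul (y := fun i => (l₁ i - a i) * (l₁ i + 1)) ?_ (by norm_num) ?_ hab0
    · convert (hl₁.sub ha).mul (hl₁.add_const 1) using 2; norm_num
    · filter_upwards [hroots] with i h
      linear_combination -h.1
  have hr₂ : Tendsto (fun i => (l₂ i + 1) / (a i * b i)) F (𝓝 2⁻¹) := by
    refine Tendsto.div_of_eq_mul (y := fun i => (l₂ i - a i) * (l₂ i - 1)) ?_ (by norm_num) ?_ hab0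
    · convert (hl₂.sub ha).mul (hl₂.sub_const 1) using 2; norm_num
    · filter_upwards [hroots] with i h
      linear_combination -h.2.1
  have hr₃ : Tendsto (fun i => (l₃ i - a i) / (a i * b i)) F (𝓝 (-1)⁻¹) := by
    refine Tendsto.div_of_eq_mul (y := fun i => l₃ i ^ 2 - 1) ?_ (by norm_num) ?_ hab0
    · convert (hl₃.pow 2).sub_const 1 using 2; norm_num
    · filter_upwards [hroots] with i h
      linear_combination -h.2.2.1
  constructor
  · have h := (hr₂.add hr₁).div hl₁ one_ne_zero
    rw [show (2⁻¹ + 2⁻¹) / 1 = (1 : ℝ) by norm_num] at h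
    refine h.congr' ?_
    filter_upwards [hab0, hl₁.eventually_ne one_ne_zero] with i hab hl
    simp only [Pi.div_apply]
    field_simp
    ring
  · have h := (hr₃.add (ha.mul hr₂)).div hl₂ (by norm_num)
    rw [show ((-1)⁻¹ + 0 * 2⁻¹) / -1 = (1 : ℝ) by norm_num] at h
    refine h.congr' ?_
    filter_upwards [hab0, hl₂.eventually_ne (by norm_num : (-1 : ℝ) ≠ 0)] with i hab hl
    simp only [Pi.div_apply]
    field_simp
    ring

end Asymptotics

theorem aOf_mul_bOf (β μh J : ℝ) : aOf β μh J * bOf β J = Real.exp (-(β * (μh + 3 * J) / 2)) := by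
  rw [aOf, bOf, ← Real.exp_add]
  ring_nf

/-- **Lemma A.1 (eigenvalue ratios and the mass gap).** Fix `J > 0` and `μ_h`
with `μ_h + J > 0`, and let `λ₁(β) > λ₃(β) > λ₂(β)` be the three (distinct,
real) eigenvalues of the transfer matrix. Then as `β → ∞`:
`λ₂/λ₁ = −1 + ab(1+o(1))`, `λ₃/λ₂ = −a + ab(1+o(1))` and, setting
`m := −log|λ₂/λ₁|`, `e^{−m} = 1 − e^{−β(μ_h+3J)/2}(1+o(1))`
(note `ab = e^{−β(μ_h+3J)/2}`). -/
theorem eigenvalue_ratios_and_mass_gap (J μh : ℝ) (hJ : 0 < J)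
    (hμh : 0 < μh + J) (lam₁ lam₂ lam₃ : ℝ → ℝ)
    (hroots : ∀ β : ℝ, 0 < β →
      IsCharRoot (aOf β μh J) (bOf β J) (lam₁ β) ∧
      IsCharRoot (aOf β μh J) (bOf β J) (lam₂ β) ∧
      IsCharRoot (aOf β μh J) (bOf β J) (lam₃ β) ∧
      lam₂ β < lam₃ β ∧ lam₃ β < lam₁ β) :
    Tendsto (fun β => (lam₂ β / lam₁ β + 1) / (aOf β μh J * bOf β J)) atTop
        (nhds 1) ∧
    Tendsto (fun β => (lam₃ β / lam₂ β + aOf β μh J) / (aOf β μh J * bOf β J))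
        atTop (nhds 1) ∧
    Tendsto
        (fun β => (1 - Real.exp (-(-Real.log |lam₂ β / lam₁ β|))) /
          Real.exp (-(β * (μh + 3 * J) / 2))) atTop (nhds 1) := by
  have decay : ∀ c > 0, Tendsto (fun β : ℝ => Real.exp (-(β * c / 2))) atTop (𝓝 0) :=
    fun c hc => Real.tendsto_exp_neg_atTop_nhds_zero.comp
      ((tendsto_id.atTop_mul_const hc).atTop_div_const two_pos)
  have ha : Tendsto (fun β => aOf β μh J) atTop (𝓝 0) := decay _ hμh
  have hab : Tendsto (fun β => aOf β μh J * bOf β J) atTop (𝓝 0) := by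
    simpa only [aOf_mul_bOf] using decay _ (by linarith : 0 < μh + 3 * J)
  have hpos : ∀ᶠ β in atTop, 0 < aOf β μh J ∧ 0 < bOf β J :=
    .of_forall fun β => ⟨Real.exp_pos _, Real.exp_pos _⟩
  have hroots' := (eventually_gt_atTop 0).mono hroots
  obtain ⟨hl₁, hl₂, -⟩ := tendsto_charRoots ha hab hpos hroots'
  obtain ⟨h₂₁, h₃₂⟩ := tendsto_charRoot_ratios ha hab hpos hroots'
  refine ⟨h₂₁, h₃₂, h₂₁.congr' ?_⟩
  filter_upwards [hl₁.eventually (lt_mem_nhds one_pos),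
    hl₂.eventually (gt_mem_nhds (by norm_num : (-1 : ℝ) < 0))] with β h₁ h₂
  have hr : lam₂ β / lam₁ β < 0 := div_neg_of_neg_of_pos h₂ h₁
  rw [neg_neg, Real.exp_log (abs_pos.2 hr.ne), abs_of_neg hr, aOf_mul_bOf]
  ring
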